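/- arXiv:1304.7936 — 3 statements merged into one kernel-verified Lean document; each statement's English description precedes it below -/
import Mathlib

section
/- For every x ∈ (0,∞) with x ≠ 1, (x-1)/log(x) = ∫_{0}^{1} [ x/((1-t)·x + t) ] · 1/( t·(1-t)·( π² + (log(t/(1-t)))² ) ) dt; that is, the associated measure of the operator monotone (logarithmic mean) function x ↦ (x-1)/log(x) is the measure on [0,1] with density t ↦ 1/( t(1-t)(π² + log²(t/(1-t))) ) with respect to Lebesgue measure. -/
/-!
For `0 < s < 1`, the substitution `u = t / ((1 - t) x + t)`, a Möbius self-map of `(0, 1)`,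
turns Euler's reflection formula `∫₀¹ u ^ (s - 1) (1 - u) ^ (-s) du = π / sin (π s)` into
`∫₀¹ t ^ (s - 1) (1 - t) ^ (-s) · x / ((1 - t) x + t) dt = π x ^ s / sin (π s)`.
Multiplying by `sin (π s)` and integrating over `s ∈ (0, 1)` gives
`π ∫₀¹ x ^ s ds = π (x - 1) / log x`. The integrand is nonnegative, so by Tonelli the order of
integration may be swapped, and the inner integral is elementary: writing
`t ^ (s - 1) (1 - t) ^ (-s) = t⁻¹ e ^ (c s)` with `c = log (t / (1 - t))`, one has
`∫₀¹ sin (π s) e ^ (c s) ds = π (e ^ c + 1) / (π ^ 2 + c ^ 2)`, which produces the density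
`π / (t (1 - t) (π ^ 2 + c ^ 2))`.
-/

open MeasureTheory Real Set Function

theorem integral_const_rpow {x : ℝ} (hx : 0 < x) (hx1 : x ≠ 1) :
    ∫ s in (0 : ℝ)..1, x ^ s = (x - 1) / log x := by
  have hlog : log x ≠ 0 := log_ne_zero_of_pos_of_ne_one hx hx1
  simp_rw [rpow_def_of_pos hx]
  rw [intervalIntegral.integral_comp_mul_left (fun s => exp s) hlog, integral_exp, smul_eq_mul]
  simp [exp_log hx, div_eq_inv_mul]

theorem integral_sin_mul_exp (c : ℝ) :
    ∫ s in (0 : ℝ)..1, sin (π * s) * exp (c * s) = π * (exp c + 1) / (π ^ 2 + c ^ 2) := by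
  have hd : π ^ 2 + c ^ 2 ≠ 0 := by positivity
  have hderiv : ∀ s ∈ uIcc (0 : ℝ) 1,
      HasDerivAt (fun u => exp (c * u) * (c * sin (π * u) - π * cos (π * u)) / (π ^ 2 + c ^ 2))
      (sin (π * s) * exp (c * s)) s := by
    intro s _
    have hlin : ∀ a : ℝ, HasDerivAt (fun u : ℝ => a * u) a s := fun a => by
      simpa using (hasDerivAt_id s).const_mul a
    have := (((hlin c).exp).mul ((((hlin π).sin).const_mul c).sub
      (((hlin π).cos).const_mul π))).div_const (π ^ 2 + c ^ 2)
    refine this.congr_deriv ?_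
    simp only [Pi.sub_apply]
    field_simp
    ring
  rw [intervalIntegral.integral_eq_sub_of_hasDerivAt hderiv
    (Continuous.intervalIntegrable (by fun_prop) _ _)]
  simp
  ring

section Tonelli

variable {α β : Type*} [MeasurableSpace α] [MeasurableSpace β] {μ : Measure α} {ν : Measure β}
  [SFinite ν] {f : α → β → ℝ}

theorem integral_integral_eq_toReal_lintegral_prod (hf : Measurable (uncurry f))
    (hf0 : ∀ᵐ z ∂μ.prod ν, 0 ≤ uncurry f z) (hfi : ∀ᵐ a ∂μ, Integrable (f a) ν) :
    ∫ a, ∫ b, f a b ∂ν ∂μ = (∫⁻ z, ENNReal.ofReal (uncurry f z) ∂μ.prod ν).toReal := by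
  have h0 : ∀ᵐ a ∂μ, 0 ≤ᵐ[ν] f a := Measure.ae_ae_of_ae_prod hf0
  rw [integral_eq_lintegral_of_nonneg_ae (h0.mono fun a ha => integral_nonneg_of_ae ha)
    hf.stronglyMeasurable.integral_prod_right.aestronglyMeasurable,
    lintegral_prod _ hf.ennreal_ofReal.aemeasurable]
  congr 1
  refine lintegral_congr_ae ?_
  filter_upwards [h0, hfi] with a ha hia
  exact ofReal_integral_eq_lintegral_ofReal hia ha

theorem integral_integral_swap_of_nonneg [SFinite μ] (hf : Measurable (uncurry f))
    (hf0 : ∀ᵐ z ∂μ.prod ν, 0 ≤ uncurry f z) (hμ : ∀ᵐ a ∂μ, Integrable (f a) ν)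
    (hν : ∀ᵐ b ∂ν, Integrable (fun a => f a b) μ) :
    ∫ a, ∫ b, f a b ∂ν ∂μ = ∫ b, ∫ a, f a b ∂μ ∂ν := by
  have hf0' : ∀ᵐ z ∂ν.prod μ, 0 ≤ uncurry f z.swap :=
    Measure.measurePreserving_swap.quasiMeasurePreserving.ae hf0
  rw [integral_integral_eq_toReal_lintegral_prod hf hf0 hμ,
    integral_integral_eq_toReal_lintegral_prod (f := fun b a => f a b)
      (hf.comp measurable_swap) hf0' hν, ← lintegral_prod_swap]
  rfl

end Tonelli

theorem ofReal_rpow_mul_one_sub_rpow {a b t : ℝ} (ht : t ∈ Icc (0 : ℝ) 1) :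
    ((t ^ (a - 1) * (1 - t) ^ (b - 1) : ℝ) : ℂ) =
      (t : ℂ) ^ ((a : ℂ) - 1) * (1 - (t : ℂ)) ^ ((b : ℂ) - 1) := by
  rw [Complex.ofReal_mul, Complex.ofReal_cpow ht.1, Complex.ofReal_cpow (sub_nonneg.2 ht.2)]
  push_cast
  rfl

theorem intervalIntegrable_rpow_mul_one_sub_rpow {a b : ℝ} (ha : 0 < a) (hb : 0 < b) :
    IntervalIntegrable (fun t : ℝ => t ^ (a - 1) * (1 - t) ^ (b - 1)) volume 0 1 := by
  have hC := Complex.betaIntegral_convergent (u := a) (v := b) (by simpa) (by simpa)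
  rw [intervalIntegrable_iff_integrableOn_Ioc_of_le zero_le_one] at hC ⊢
  refine IntegrableOn.congr_fun hC.re (fun t ht => ?_) measurableSet_Ioc
  rw [← ofReal_rpow_mul_one_sub_rpow (Ioc_subset_Icc_self ht)]
  exact Complex.ofReal_re _

theorem integral_rpow_mul_one_sub_rpow {a b : ℝ} (ha : 0 < a) (hb : 0 < b) :
    ∫ t in (0 : ℝ)..1, t ^ (a - 1) * (1 - t) ^ (b - 1) = ProbabilityTheory.beta a b := by
  rw [ProbabilityTheory.beta_eq_betaIntegralReal a b ha hb, Complex.betaIntegral,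
    intervalIntegral.integral_congr
      (g := fun t : ℝ => ((t ^ (a - 1) * (1 - t) ^ (b - 1) : ℝ) : ℂ))
      fun t ht => (ofReal_rpow_mul_one_sub_rpow (by rwa [uIcc_of_le zero_le_one] at ht)).symm,
    intervalIntegral.integral_ofReal, Complex.ofReal_re]

theorem integral_rpow_sub_one_mul_one_sub_rpow_neg {s : ℝ} (hs0 : 0 < s) (hs1 : s < 1) :
    ∫ t in (0 : ℝ)..1, t ^ (s - 1) * (1 - t) ^ (-s) = π / sin (π * s) := by
  simpa [ProbabilityTheory.beta, Gamma_mul_Gamma_one_sub] using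
    integral_rpow_mul_one_sub_rpow hs0 (sub_pos.2 hs1)

noncomputable def mobiusUnit (x t : ℝ) : ℝ := t / ((1 - t) * x + t)

section mobiusUnit

variable {x t : ℝ}

theorem mobiusUnit_denom_pos (hx : 0 < x) (ht : t ∈ Ioo (0 : ℝ) 1) : 0 < (1 - t) * x + t := by
  have := ht.1
  have := ht.2
  positivity

theorem one_sub_mobiusUnit (hx : 0 < x) (ht : t ∈ Ioo (0 : ℝ) 1) :
    1 - mobiusUnit x t = (1 - t) * x / ((1 - t) * x + t) := by
  have := mobiusUnit_denom_pos hx ht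
  rw [mobiusUnit]
  field_simp
  ring

theorem mobiusUnit_mem_Ioo (hx : 0 < x) (ht : t ∈ Ioo (0 : ℝ) 1) :
    mobiusUnit x t ∈ Ioo (0 : ℝ) 1 := by
  have hD := mobiusUnit_denom_pos hx ht
  have h1 : 0 < 1 - t := sub_pos.2 ht.2
  refine ⟨div_pos ht.1 hD, sub_pos.1 ?_⟩
  rw [one_sub_mobiusUnit hx ht]
  positivity

theorem mobiusUnit_inv_mobiusUnit (hx : 0 < x) (ht : t ∈ Ioo (0 : ℝ) 1) :
    mobiusUnit x⁻¹ (mobiusUnit x t) = t := by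
  have := mobiusUnit_denom_pos hx ht
  rw [mobiusUnit, one_sub_mobiusUnit hx ht, mobiusUnit]
  field_simp
  ring

theorem image_mobiusUnit_Ioo (hx : 0 < x) : mobiusUnit x '' Ioo 0 1 = Ioo 0 1 := by
  refine Subset.antisymm (image_subset_iff.2 fun t ht => mobiusUnit_mem_Ioo hx ht) fun u hu => ?_
  refine ⟨mobiusUnit x⁻¹ u, mobiusUnit_mem_Ioo (inv_pos.2 hx) hu, ?_⟩
  simpa using mobiusUnit_inv_mobiusUnit (inv_pos.2 hx) hu

theorem injOn_mobiusUnit (hx : 0 < x) : InjOn (mobiusUnit x) (Ioo 0 1) :=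
  LeftInvOn.injOn fun _ ht => mobiusUnit_inv_mobiusUnit hx ht

theorem hasDerivAt_mobiusUnit (hx : 0 < x) (ht : t ∈ Ioo (0 : ℝ) 1) :
    HasDerivAt (mobiusUnit x) (x / ((1 - t) * x + t) ^ 2) t := by
  have hD := (mobiusUnit_denom_pos hx ht).ne'
  have := (hasDerivAt_id t).div ((((hasDerivAt_const t 1).sub (hasDerivAt_id t)).mul_const x).add
    (hasDerivAt_id t)) hD
  refine this.congr_deriv ?_
  simp only [Pi.add_apply, Pi.sub_apply, id]
  field_simp
  ring

theorem integral_Ioo_eq_integral_Ioo_comp_mobiusUnit (hx : 0 < x) (g : ℝ → ℝ) :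
    ∫ u in Ioo (0 : ℝ) 1, g u =
      ∫ t in Ioo (0 : ℝ) 1, x / ((1 - t) * x + t) ^ 2 * g (mobiusUnit x t) := by
  have h := integral_image_eq_integral_abs_deriv_smul measurableSet_Ioo
    (fun t ht => (hasDerivAt_mobiusUnit hx ht).hasDerivWithinAt) (injOn_mobiusUnit hx) g
  rw [image_mobiusUnit_Ioo hx] at h
  rw [h]
  refine setIntegral_congr_fun measurableSet_Ioo fun t ht => ?_
  have := mobiusUnit_denom_pos hx ht
  rw [smul_eq_mul, abs_of_pos (by positivity)]

theorem integrableOn_Ioo_iff_comp_mobiusUnit (hx : 0 < x) (g : ℝ → ℝ) :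
    IntegrableOn g (Ioo (0 : ℝ) 1) ↔
      IntegrableOn (fun t => x / ((1 - t) * x + t) ^ 2 * g (mobiusUnit x t)) (Ioo (0 : ℝ) 1) := by
  have h := integrableOn_image_iff_integrableOn_abs_deriv_smul measurableSet_Ioo
    (fun t ht => (hasDerivAt_mobiusUnit hx ht).hasDerivWithinAt) (injOn_mobiusUnit hx) g
  rw [image_mobiusUnit_Ioo hx] at h
  rw [h]
  refine integrableOn_congr_fun (fun t ht => ?_) measurableSet_Ioo
  have := mobiusUnit_denom_pos hx ht
  rw [smul_eq_mul, abs_of_pos (by positivity)]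

theorem mobiusUnit_rpow_mul_one_sub_rpow (hx : 0 < x) (ht : t ∈ Ioo (0 : ℝ) 1) (s : ℝ) :
    x / ((1 - t) * x + t) ^ 2 * (mobiusUnit x t ^ (s - 1) * (1 - mobiusUnit x t) ^ (-s)) =
      x ^ (-s) * (t ^ (s - 1) * (1 - t) ^ (-s) * (x / ((1 - t) * x + t))) := by
  have hD := mobiusUnit_denom_pos hx ht
  have h1 : 0 < 1 - t := sub_pos.2 ht.2
  rw [one_sub_mobiusUnit hx ht, mobiusUnit, div_rpow ht.1.le hD.le,
    div_rpow (by positivity) hD.le, mul_rpow h1.le hx.le, rpow_sub_one hD.ne', rpow_neg hD.le]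
  generalize (1 - t) * x + t = D at hD ⊢
  have := rpow_pos_of_pos hD s
  field_simp

end mobiusUnit

section WeightedBeta

variable {x s : ℝ}

theorem integrableOn_rpow_sub_one_mul_one_sub_rpow_neg_mul_harmonic (hx : 0 < x) (hs0 : 0 < s)
    (hs1 : s < 1) :
    IntegrableOn (fun t => t ^ (s - 1) * (1 - t) ^ (-s) * (x / ((1 - t) * x + t)))
      (Ioo (0 : ℝ) 1) := by
  have hbeta := (intervalIntegrable_rpow_mul_one_sub_rpow hs0 (sub_pos.2 hs1)).1.mono_set
    Ioo_subset_Ioc_self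
  rw [integrableOn_Ioo_iff_comp_mobiusUnit hx] at hbeta
  simp_rw [sub_sub_cancel_left] at hbeta
  have := (IntegrableOn.congr_fun hbeta (fun t ht => mobiusUnit_rpow_mul_one_sub_rpow hx ht s)
    measurableSet_Ioo).const_mul (x ^ s)
  refine IntegrableOn.congr_fun this (fun t _ => ?_) measurableSet_Ioo
  rw [← mul_assoc, ← rpow_add hx, add_neg_cancel, rpow_zero, one_mul]

theorem integral_rpow_sub_one_mul_one_sub_rpow_neg_mul_harmonic (hx : 0 < x) (hs0 : 0 < s)
    (hs1 : s < 1) :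
    ∫ t in Ioo (0 : ℝ) 1, t ^ (s - 1) * (1 - t) ^ (-s) * (x / ((1 - t) * x + t)) =
      x ^ s * (π / sin (π * s)) := by
  have hbeta := integral_rpow_sub_one_mul_one_sub_rpow_neg hs0 hs1
  rw [intervalIntegral.integral_of_le zero_le_one, integral_Ioc_eq_integral_Ioo,
    integral_Ioo_eq_integral_Ioo_comp_mobiusUnit hx,
    setIntegral_congr_fun measurableSet_Ioo fun t ht => mobiusUnit_rpow_mul_one_sub_rpow hx ht s,
    integral_const_mul, rpow_neg hx.le] at hbeta
  rw [← hbeta, ← mul_assoc, mul_inv_cancel₀ (rpow_pos_of_pos hx s).ne', one_mul]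

end WeightedBeta

theorem rpow_sub_one_mul_one_sub_rpow_neg {t : ℝ} (ht : t ∈ Ioo (0 : ℝ) 1) (s : ℝ) :
    t ^ (s - 1) * (1 - t) ^ (-s) = t⁻¹ * exp (log (t / (1 - t)) * s) := by
  have h1 : 0 < 1 - t := sub_pos.2 ht.2
  rw [← rpow_def_of_pos (div_pos ht.1 h1), div_rpow ht.1.le h1.le, rpow_sub_one ht.1.ne',
    rpow_neg h1.le]
  ring

theorem integral_sin_mul_rpow_sub_one_mul_one_sub_rpow_neg {t : ℝ} (ht : t ∈ Ioo (0 : ℝ) 1) :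
    ∫ s in (0 : ℝ)..1, sin (π * s) * (t ^ (s - 1) * (1 - t) ^ (-s)) =
      π / (t * (1 - t) * (π ^ 2 + log (t / (1 - t)) ^ 2)) := by
  have h1 : 0 < 1 - t := sub_pos.2 ht.2
  simp_rw [rpow_sub_one_mul_one_sub_rpow_neg ht, mul_left_comm _ t⁻¹]
  rw [intervalIntegral.integral_const_mul, integral_sin_mul_exp, exp_log (div_pos ht.1 h1)]
  have : 0 < π ^ 2 + log (t / (1 - t)) ^ 2 := by positivity
  have := ht.1
  field_simp
  ring

noncomputable def logMeanKernel (x s t : ℝ) : ℝ :=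
  sin (π * s) * (t ^ (s - 1) * (1 - t) ^ (-s) * (x / ((1 - t) * x + t)))

section logMeanKernel

variable {x s t : ℝ}

theorem measurable_logMeanKernel (x : ℝ) : Measurable (uncurry (logMeanKernel x)) := by
  unfold logMeanKernel
  fun_prop

theorem logMeanKernel_nonneg (hx : 0 < x) (hs : s ∈ Icc (0 : ℝ) 1) (ht : t ∈ Ioo (0 : ℝ) 1) :
    0 ≤ logMeanKernel x s t := by
  have hsin : 0 ≤ sin (π * s) :=
    sin_nonneg_of_nonneg_of_le_pi (by nlinarith [pi_pos, hs.1]) (by nlinarith [pi_pos, hs.2])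
  have := mobiusUnit_denom_pos hx ht
  have := ht.1
  have := sub_pos.2 ht.2
  unfold logMeanKernel
  positivity

theorem integrableOn_logMeanKernel_right (hx : 0 < x) (hs : s ∈ Ioo (0 : ℝ) 1) :
    IntegrableOn (logMeanKernel x s) (Ioo 0 1) :=
  (integrableOn_rpow_sub_one_mul_one_sub_rpow_neg_mul_harmonic hx hs.1 hs.2).const_mul _

theorem integral_logMeanKernel_right (hx : 0 < x) (hs : s ∈ Ioo (0 : ℝ) 1) :
    ∫ t in Ioo (0 : ℝ) 1, logMeanKernel x s t = π * x ^ s := by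
  have : sin (π * s) ≠ 0 := (sin_pos_of_pos_of_lt_pi (by nlinarith [pi_pos, hs.1])
    (by nlinarith [pi_pos, hs.2])).ne'
  simp only [logMeanKernel]
  rw [integral_const_mul, integral_rpow_sub_one_mul_one_sub_rpow_neg_mul_harmonic hx hs.1 hs.2]
  field_simp

theorem integrableOn_logMeanKernel_left (ht : t ∈ Ioo (0 : ℝ) 1) :
    IntegrableOn (fun s => logMeanKernel x s t) (Ioo 0 1) := by
  refine (Continuous.integrableOn_Icc ?_).mono_set Ioo_subset_Icc_self
  have := ht.1.ne'
  have := (sub_pos.2 ht.2).ne'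
  unfold logMeanKernel
  fun_prop (disch := assumption)

theorem integral_logMeanKernel_left (ht : t ∈ Ioo (0 : ℝ) 1) :
    ∫ s in Ioo (0 : ℝ) 1, logMeanKernel x s t =
      π * ((x / ((1 - t) * x + t)) * (1 / (t * (1 - t) * (π ^ 2 + log (t / (1 - t)) ^ 2)))) := by
  have hK : ∀ s, logMeanKernel x s t =
      x / ((1 - t) * x + t) * (sin (π * s) * (t ^ (s - 1) * (1 - t) ^ (-s))) := fun s => by
    rw [logMeanKernel]
    ring
  simp_rw [hK]
  rw [integral_const_mul, ← integral_Ioc_eq_integral_Ioo,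
    ← intervalIntegral.integral_of_le zero_le_one,
    integral_sin_mul_rpow_sub_one_mul_one_sub_rpow_neg ht]
  ring

end logMeanKernel

theorem stmt9 (x : ℝ) (hx : 0 < x) (hx1 : x ≠ 1) :
    (x - 1) / Real.log x =
      ∫ t in (0 : ℝ)..1, (x / ((1 - t) * x + t)) *
        (1 / (t * (1 - t) * (π ^ 2 + Real.log (t / (1 - t)) ^ 2))) := by
  have hnonneg : ∀ᵐ z ∂(volume.restrict (Ioo (0 : ℝ) 1)).prod
      (volume.restrict (Ioo (0 : ℝ) 1)), 0 ≤ uncurry (logMeanKernel x) z := by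
    rw [Measure.prod_restrict]
    exact ae_restrict_of_forall_mem (measurableSet_Ioo.prod measurableSet_Ioo)
      fun z hz => logMeanKernel_nonneg hx (Ioo_subset_Icc_self hz.1) hz.2
  have hswap := integral_integral_swap_of_nonneg (measurable_logMeanKernel x) hnonneg
    (ae_restrict_of_forall_mem measurableSet_Ioo fun _ hs => integrableOn_logMeanKernel_right hx hs)
    (ae_restrict_of_forall_mem measurableSet_Ioo fun t ht => integrableOn_logMeanKernel_left ht)
  rw [setIntegral_congr_fun measurableSet_Ioo fun s hs => integral_logMeanKernel_right hx hs,
    setIntegral_congr_fun measurableSet_Ioo fun t ht => integral_logMeanKernel_left ht,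
    integral_const_mul, integral_const_mul, ← integral_Ioc_eq_integral_Ioo,
    ← integral_Ioc_eq_integral_Ioo, ← intervalIntegral.integral_of_le zero_le_one,
    ← intervalIntegral.integral_of_le zero_le_one, integral_const_rpow hx hx1] at hswap
  exact mul_left_cancel₀ pi_ne_zero hswap
end

section
/- For every t ∈ [0,1], the function x ↦ 1 !_t x is an extreme point of the convex set S = { f : [0,∞) → [0,∞) : f is operator monotone and f(1) = 1 }, viewed as a subset of the real vector space of functions from [0,∞) to ℝ. -/
open MeasureTheory Real ComplexOrder

/-- The `t`-weighted harmonic mean `1 !_t x` of `1` and `x`, for `t ∈ [0,1]`, `x ∈ [0,∞)`. -/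
noncomputable def whm (t x : ℝ) : ℝ :=
  if t = 0 ∧ x = 0 then 1 else x / ((1 - t) * x + t)

/-- `f` is operator monotone on `[0,∞)`: for all `n` and all positive semidefinite complex
`n × n` matrices `A ≤ B` (Loewner order), `f(A) ≤ f(B)` via the continuous functional
calculus. -/
def OperatorMonotone (f : ℝ → ℝ) : Prop :=
  ∀ (n : ℕ) (A B : Matrix (Fin n) (Fin n) ℂ),
    A.PosSemidef → B.PosSemidef → (B - A).PosSemidef →
    (cfc f B - cfc f A).PosSemidef

/-- Extension of a function `f : [0,∞) → ℝ` to all of `ℝ` (by junk value `0` on negatives);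
this is the function applied to positive semidefinite matrices via the continuous
functional calculus. -/
noncomputable def ext (f : Set.Ici (0 : ℝ) → ℝ) : ℝ → ℝ :=
  fun x => if h : 0 ≤ x then f ⟨x, Set.mem_Ici.mpr h⟩ else 0

/-- The convex set of normalized operator monotone functions from `[0,∞)` to `[0,∞)`,
inside the real vector space of functions from `[0,∞)` to `ℝ`. -/
def S : Set (Set.Ici (0 : ℝ) → ℝ) :=
  {f | (∀ x, 0 ≤ f x) ∧ OperatorMonotone (ext f) ∧ f ⟨1, Set.mem_Ici.mpr zero_le_one⟩ = 1}

/-!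
For `t = 0` the function is the constant `1`. Members of `S` are monotone and equal `1` at `1`,
so neither summand of a convex decomposition of `1` can leave the value `1`.

For `t > 0` the harmonic mean vanishes at `0`, hence so do both (nonnegative) summands. For an
operator monotone `f` with `f 0 = 0` and `f 1 = 1`, compare the projection `P` onto a unit
vector `(x, y)` with `diag(λ, μ) = P + w wᴴ`, where `w = (x', -y')`, `x y = x' y'`,
`λ = x² + x'²` and `μ = y² + y'²`. Since `f` fixes `P` and maps `diag(λ, μ)` to
`diag(f λ, f μ)`, the point `(f λ - x², f μ - y²)` lies in the convex region
`{X, Y ≥ 0, X Y ≥ x² y²}`. The harmonic mean lands on its boundary hyperbola, every point of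
which is extreme, so both summands agree with it at `λ`; and every `λ > 0` arises this way.
-/

theorem isStarProjection_vecMulVec_self_star {n R : Type*} [Fintype n] [CommSemiring R]
    [StarRing R] {v : n → R} (hv : star v ⬝ᵥ v = 1) :
    IsStarProjection (Matrix.vecMulVec v (star v)) where
  isIdempotentElem := by
    rw [IsIdempotentElem, Matrix.vecMulVec_mul_vecMulVec, hv, one_smul]
  isSelfAdjoint := by
    rw [IsSelfAdjoint, Matrix.star_eq_conjTranspose, Matrix.conjTranspose_vecMulVec, star_star]

section StarProjection

variable {A : Type*} [Ring A] [StarRing A] [TopologicalSpace A] [Algebra ℝ A]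
  [ContinuousFunctionalCalculus ℝ A IsSelfAdjoint] [ContinuousMap.UniqueHom ℝ A] {Q : A}

theorem IsStarProjection.cfc_smul_add_smul_one_sub (hQ : IsStarProjection Q) (f : ℝ → ℝ)
    (α β : ℝ) : cfc f (α • Q + β • (1 - Q)) = f α • Q + f β • (1 - Q) := by
  have hspec : spectrum ℝ Q ⊆ {0, 1} :=
    (isIdempotentElem_iff_spectrum_subset ℝ Q hQ.isSelfAdjoint).1 hQ.isIdempotentElem
  have hinterp (a b : ℝ) : cfc (fun x => a * x + b * (1 - x)) Q = a • Q + b • (1 - Q) := by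
    rw [cfc_add .., cfc_const_mul_id .., cfc_const_mul .., cfc_sub .., cfc_const .., cfc_id' ..,
      Algebra.algebraMap_eq_smul_one, one_smul]
  rw [← hinterp, ← cfc_comp' f _ Q (((Set.toFinite _).subset hspec).image _ |>.continuousOn f),
    ← hinterp]
  refine cfc_congr fun x hx => ?_
  rcases hspec hx with rfl | rfl <;> simp

end StarProjection

section OperatorMonotone

open scoped MatrixOrder Matrix.Norms.L2Operator

theorem operatorMonotone_iff {f : ℝ → ℝ} : OperatorMonotone f ↔
    ∀ (n : ℕ) (A B : Matrix (Fin n) (Fin n) ℂ), 0 ≤ A → A ≤ B → cfc f A ≤ cfc f B := by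
  refine forall₃_congr fun n A B => ?_
  simp only [← Matrix.nonneg_iff_posSemidef, sub_nonneg]
  exact ⟨fun h hA hAB => h hA (hA.trans hAB) hAB, fun h hA _ hAB => h hA hAB⟩

theorem OperatorMonotone.congr {f g : ℝ → ℝ} (hf : OperatorMonotone f)
    (hfg : Set.EqOn f g (Set.Ici 0)) : OperatorMonotone g := by
  rw [operatorMonotone_iff] at hf ⊢
  intro n A B hA hAB
  have hB : 0 ≤ B := hA.trans hAB
  rw [← cfc_congr (hfg.mono fun x hx => spectrum_nonneg_of_nonneg hA hx),
    ← cfc_congr (hfg.mono fun x hx => spectrum_nonneg_of_nonneg hB hx)]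
  exact hf n A B hA hAB

theorem operatorMonotone_const (c : ℝ) : OperatorMonotone fun _ => c := by
  rw [operatorMonotone_iff]
  intro n A B hA hAB
  rw [cfc_const c A hA.isSelfAdjoint, cfc_const c B (hA.trans hAB).isSelfAdjoint]

theorem operatorMonotone_id : OperatorMonotone id := by
  rw [operatorMonotone_iff]
  intro n A B hA hAB
  rwa [cfc_id ℝ A hA.isSelfAdjoint, cfc_id ℝ B (hA.trans hAB).isSelfAdjoint]

theorem OperatorMonotone.monotoneOn {f : ℝ → ℝ} (hf : OperatorMonotone f) :
    MonotoneOn f (Set.Ici 0) := by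
  intro x hx y hy hxy
  have h := operatorMonotone_iff.1 hf 1 (algebraMap ℝ _ x) _ (algebraMap_nonneg _ hx)
    (algebraMap_mono _ hxy)
  rw [cfc_algebraMap, cfc_algebraMap, Matrix.le_iff, ← map_sub] at h
  simpa [Matrix.algebraMap_matrix_apply] using h.diag_nonneg (i := 0)

theorem cfc_div_mul_add {n : ℕ} {s t : ℝ} (hs : 0 < s) (ht : 0 < t)
    {A : Matrix (Fin n) (Fin n) ℂ} (hA : 0 ≤ A) :
    cfc (fun x => x / (s * x + t)) A =
      algebraMap ℝ _ s⁻¹ - (t / s) • Ring.inverse (s • A + algebraMap ℝ _ t) := by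
  have hcont (g : ℝ → ℝ) : ContinuousOn g (spectrum ℝ A) := A.finite_real_spectrum.continuousOn g
  have hden {x} (hx : x ∈ spectrum ℝ A) : 0 < s * x + t := by
    have := spectrum_nonneg_of_nonneg hA hx
    positivity
  calc cfc (fun x => x / (s * x + t)) A
      = cfc (fun x => s⁻¹ - (t / s) * (s * x + t)⁻¹) A := by
        refine cfc_congr fun x hx => ?_
        rw [div_eq_iff (hden hx).ne', sub_mul, mul_assoc, inv_mul_cancel₀ (hden hx).ne']
        field_simp
        ring
    _ = _ := by
        rw [cfc_sub _ _ _ (hcont _) (hcont _), cfc_const _ _ hA.isSelfAdjoint,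
          cfc_const_mul _ _ _ (hcont _),
          cfc_inv _ _ (fun x hx => (hden hx).ne') (hcont _) hA.isSelfAdjoint,
          cfc_add_const _ _ _ (hcont _) hA.isSelfAdjoint, cfc_const_mul_id _ _ hA.isSelfAdjoint]

theorem operatorMonotone_div_mul_add {s t : ℝ} (hs : 0 < s) (ht : 0 < t) :
    OperatorMonotone fun x => x / (s * x + t) := by
  rw [operatorMonotone_iff]
  intro n A B hA hAB
  rw [cfc_div_mul_add hs ht hA, cfc_div_mul_add hs ht (hA.trans hAB)]
  refine sub_le_sub_left (smul_le_smul_of_nonneg_left ?_ (by positivity)) _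
  exact CStarAlgebra.ringInverse_le_ringInverse (by gcongr)
    (.nonneg_add (smul_nonneg hs.le hA) (isStrictlyPositive_algebraMap ht))

theorem OperatorMonotone.le_smul_add_smul_one_sub {f : ℝ → ℝ} (hf : OperatorMonotone f)
    (hf0 : f 0 = 0) (hf1 : f 1 = 1) {n : ℕ} {P Q : Matrix (Fin n) (Fin n) ℂ}
    (hP : IsStarProjection P) (hQ : IsStarProjection Q) {α β : ℝ}
    (hPQ : P ≤ α • Q + β • (1 - Q)) : P ≤ f α • Q + f β • (1 - Q) := by
  have hfP : cfc f P = P := by simpa [hf0, hf1] using hP.cfc_smul_add_smul_one_sub f 1 0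
  simpa [hfP, hQ.cfc_smul_add_smul_one_sub] using
    operatorMonotone_iff.1 hf n P _ hP.nonneg hPQ

theorem OperatorMonotone.sq_mul_sq_le {f : ℝ → ℝ} (hf : OperatorMonotone f) (hf0 : f 0 = 0)
    (hf1 : f 1 = 1) {x y x' y' : ℝ} (hxy : x ^ 2 + y ^ 2 = 1) (hprod : x * y = x' * y') :
    x ^ 2 ≤ f (x ^ 2 + x' ^ 2) ∧ y ^ 2 ≤ f (y ^ 2 + y' ^ 2) ∧
      x ^ 2 * y ^ 2 ≤ (f (x ^ 2 + x' ^ 2) - x ^ 2) * (f (y ^ 2 + y' ^ 2) - y ^ 2) := by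
  set v : Fin 2 → ℂ := ![x, y]
  set e : Fin 2 → ℂ := ![1, 0]
  set P := Matrix.vecMulVec v (star v)
  set Q := Matrix.vecMulVec e (star e)
  have hP : IsStarProjection P := isStarProjection_vecMulVec_self_star <| by
    simp [v, dotProduct, Fin.sum_univ_two, ← sq]
    exact_mod_cast hxy
  have hQ : IsStarProjection Q :=
    isStarProjection_vecMulVec_self_star (by simp [e, dotProduct, Fin.sum_univ_two])
  have hM (a b : ℝ) : a • Q + b • (1 - Q) - P =
      !![((a - x ^ 2 : ℝ) : ℂ), -(x * y : ℝ); -(x * y : ℝ), (b - y ^ 2 : ℝ)] := by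
    ext i j
    fin_cases i <;> fin_cases j <;>
      simp [P, Q, v, e, Matrix.vecMulVec_apply, -Matrix.vecMulVec_cons, -Matrix.cons_vecMulVec,
        Complex.real_smul] <;> ring
  have hPQ : P ≤ (x ^ 2 + x' ^ 2) • Q + (y ^ 2 + y' ^ 2) • (1 - Q) := by
    set w : Fin 2 → ℂ := ![x', -y']
    have hrank : (x ^ 2 + x' ^ 2) • Q + (y ^ 2 + y' ^ 2) • (1 - Q) - P =
        Matrix.vecMulVec w (star w) := by
      rw [hM]
      ext i j
      fin_cases i <;> fin_cases j <;>
        simp [w, Matrix.vecMulVec_apply, -Matrix.vecMulVec_cons, hprod] <;> ring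
    rw [Matrix.le_iff, hrank]
    exact Matrix.posSemidef_vecMulVec_self_star w
  have h := Matrix.le_iff.1 (hf.le_smul_add_smul_one_sub hf0 hf1 hP hQ hPQ)
  rw [hM] at h
  have h00 := h.diag_nonneg (i := 0)
  have h11 := h.diag_nonneg (i := 1)
  have hdet := h.det_nonneg
  simp [Matrix.det_fin_two_of] at h00 h11 hdet
  norm_cast at h00 h11 hdet
  exact ⟨h00, h11, by linarith⟩

end OperatorMonotone

theorem whm_zero_left (x : ℝ) : whm 0 x = 1 := by
  by_cases hx : x = 0 <;> simp [whm, hx]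

theorem whm_one_left (x : ℝ) : whm 1 x = x := by
  simp [whm]

theorem whm_of_pos {t : ℝ} (ht : 0 < t) (x : ℝ) : whm t x = x / ((1 - t) * x + t) := by
  simp [whm, ht.ne']

theorem whm_one_right (t : ℝ) : whm t 1 = 1 := by
  simp [whm]

theorem whm_nonneg {t x : ℝ} (ht : t ∈ Set.Icc (0 : ℝ) 1) (hx : 0 ≤ x) : 0 ≤ whm t x := by
  unfold whm
  split_ifs
  · exact zero_le_one
  · have : 0 ≤ 1 - t := sub_nonneg.2 ht.2
    have := ht.1
    positivity

theorem operatorMonotone_whm {t : ℝ} (ht : t ∈ Set.Icc (0 : ℝ) 1) : OperatorMonotone (whm t) := by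
  rcases ht.1.eq_or_lt with rfl | ht0
  · simpa [funext whm_zero_left] using operatorMonotone_const 1
  rcases ht.2.eq_or_lt with rfl | ht1
  · rw [show whm 1 = id from funext whm_one_left]
    exact operatorMonotone_id
  simpa [funext (whm_of_pos ht0)] using operatorMonotone_div_mul_add (sub_pos.2 ht1) ht0

theorem whm_sub_sq_mul_whm_sub_sq {t x y x' y' : ℝ} (ht0 : 0 < t) (ht1 : t ≤ 1)
    (hxy : x ^ 2 + y ^ 2 = 1) (hprod : x * y = x' * y') :
    (whm t (x ^ 2 + x' ^ 2) - x ^ 2) * (whm t (y ^ 2 + y' ^ 2) - y ^ 2) = x ^ 2 * y ^ 2 := by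
  have hs : 0 ≤ 1 - t := sub_nonneg.2 ht1
  have h1 : 0 < (1 - t) * (x ^ 2 + x' ^ 2) + t := by positivity
  have h2 : 0 < (1 - t) * (y ^ 2 + y' ^ 2) + t := by positivity
  rw [whm_of_pos ht0, whm_of_pos ht0, div_sub' h1.ne', div_sub' h2.ne', div_mul_div_comm,
    div_eq_iff (by positivity)]
  have hprod2 : x ^ 2 * y ^ 2 = x' ^ 2 * y' ^ 2 := by rw [← mul_pow, ← mul_pow, hprod]
  linear_combination (-t) * hprod2 - (1 - t) * (x ^ 2 + x' ^ 2) * (y ^ 2 + y' ^ 2) * hxy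

theorem exists_sq_add_sq_eq {z : ℝ} (hz : 0 < z) : ∃ x y x' y' : ℝ,
    x ^ 2 + y ^ 2 = 1 ∧ x * y = x' * y' ∧ x * y ≠ 0 ∧ x ^ 2 + x' ^ 2 = z := by
  obtain ⟨w, hw, rfl⟩ : ∃ w : ℝ, 0 < w ∧ w ^ 2 = z := ⟨√z, by positivity, Real.sq_sqrt hz.le⟩
  obtain ⟨r, hr, hr2⟩ : ∃ r : ℝ, 0 < r ∧ r ^ 2 = 1 + w ^ 2 :=
    ⟨√(1 + w ^ 2), by positivity, Real.sq_sqrt (by positivity)⟩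
  refine ⟨w / r, 1 / r, w ^ 2 / r, 1 / (w * r), ?_, ?_, by positivity, ?_⟩
  · field_simp
    linarith
  · field_simp
  · field_simp
    rw [hr2]

theorem mem_extremePoints_hyperbola {c : ℝ} (hc : 0 < c) {p : ℝ × ℝ} (h1 : 0 ≤ p.1)
    (h2 : 0 ≤ p.2) (hp : p.1 * p.2 = c) :
    p ∈ {q : ℝ × ℝ | 0 ≤ q.1 ∧ 0 ≤ q.2 ∧ c ≤ q.1 * q.2}.extremePoints ℝ := by
  refine mem_extremePoints_iff_left.2 ⟨⟨h1, h2, hp.ge⟩, ?_⟩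
  rintro ⟨X, Y⟩ ⟨hX, hY, hXY⟩ ⟨X', Y'⟩ ⟨hX', hY', hXY'⟩ ⟨a, b, ha, hb, hab, rfl⟩
  simp only [Prod.smul_mk, Prod.mk_add_mk, smul_eq_mul] at hp hX hY hXY hX' hY' hXY' ⊢
  obtain rfl : b = 1 - a := by linarith
  -- `p.1 * p.2 - c = a²(XY - c) + b²(X'Y' - c) + ab(XY' + X'Y - 2c)` with `b = 1 - a`, so
  -- `XY' + X'Y ≤ 2c`; together with `(XY')(X'Y) ≥ c²` this forces `XY' = X'Y = c`.
  have hdiag := mul_le_mul_of_nonneg_left hXY (sq_nonneg a)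
  have hdiag' := mul_le_mul_of_nonneg_left hXY' (sq_nonneg (1 - a))
  have hcross : X * Y' + X' * Y ≤ 2 * c := by
    refine le_of_mul_le_mul_left ?_ (mul_pos ha hb)
    nlinarith
  have hcross' : c ^ 2 ≤ (X * Y') * (X' * Y) := by
    nlinarith [mul_le_mul hXY hXY' hc.le (by positivity)]
  have hcross_sym : X * Y' = X' * Y := by
    nlinarith [pow_le_pow_left₀ (add_nonneg (mul_nonneg hX hY') (mul_nonneg hX' hY)) hcross 2]
  have hcross_c : X * Y' = c := by nlinarith [mul_nonneg hX hY']
  have hXY_c : X * Y = c := by nlinarith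
  have hX0 : 0 < X := by nlinarith
  have hY0 : 0 < Y := by nlinarith
  obtain rfl : Y' = Y := mul_left_cancel₀ hX0.ne' (by linarith)
  obtain rfl : X' = X := mul_right_cancel₀ hY0.ne' (by linarith)
  ext <;> ring

theorem eqOn_one_of_monotoneOn {F G : ℝ → ℝ} (hF : MonotoneOn F (Set.Ici 0))
    (hG : MonotoneOn G (Set.Ici 0)) (hF1 : F 1 = 1) (hG1 : G 1 = 1) {a b : ℝ} (ha : 0 < a)
    (hb : 0 < b) (hab : a + b = 1) (h : Set.EqOn (fun x => a * F x + b * G x) 1 (Set.Ici 0)) :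
    Set.EqOn F 1 (Set.Ici 0) := by
  intro x hx
  have hx' : a * F x + b * G x = 1 := h hx
  have h1 : (1 : ℝ) ∈ Set.Ici 0 := Set.mem_Ici.2 zero_le_one
  show F x = 1
  rcases le_total x 1 with hx1 | hx1
  · nlinarith [hF hx h1 hx1, hG hx h1 hx1]
  · nlinarith [hF h1 hx hx1, hG h1 hx hx1]

theorem OperatorMonotone.eq_whm_sq_add_sq {t : ℝ} (ht0 : 0 < t) (ht1 : t ≤ 1) {F G : ℝ → ℝ}
    (hF : OperatorMonotone F) (hG : OperatorMonotone G) (hF0 : F 0 = 0) (hG0 : G 0 = 0)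
    (hF1 : F 1 = 1) (hG1 : G 1 = 1) {a b : ℝ} (ha : 0 < a) (hb : 0 < b) (hab : a + b = 1)
    (h : Set.EqOn (fun x => a * F x + b * G x) (whm t) (Set.Ici 0)) {x y x' y' : ℝ}
    (hxy : x ^ 2 + y ^ 2 = 1) (hprod : x * y = x' * y') (hne : x * y ≠ 0) :
    F (x ^ 2 + x' ^ 2) = whm t (x ^ 2 + x' ^ 2) := by
  obtain ⟨hF₁, hF₂, hF₃⟩ := hF.sq_mul_sq_le hF0 hF1 hxy hprod
  obtain ⟨hG₁, hG₂, hG₃⟩ := hG.sq_mul_sq_le hG0 hG1 hxy hprod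
  have hlam : a * F (x ^ 2 + x' ^ 2) + b * G (x ^ 2 + x' ^ 2) = whm t (x ^ 2 + x' ^ 2) :=
    h (Set.mem_Ici.2 (by positivity))
  have hmu : a * F (y ^ 2 + y' ^ 2) + b * G (y ^ 2 + y' ^ 2) = whm t (y ^ 2 + y' ^ 2) :=
    h (Set.mem_Ici.2 (by positivity))
  have hseg : (whm t (x ^ 2 + x' ^ 2) - x ^ 2, whm t (y ^ 2 + y' ^ 2) - y ^ 2) ∈ openSegment ℝ
      (F (x ^ 2 + x' ^ 2) - x ^ 2, F (y ^ 2 + y' ^ 2) - y ^ 2)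
      (G (x ^ 2 + x' ^ 2) - x ^ 2, G (y ^ 2 + y' ^ 2) - y ^ 2) := by
    refine ⟨a, b, ha, hb, hab, Prod.ext ?_ ?_⟩
    · simp only [Prod.fst_add, Prod.smul_fst, smul_eq_mul]
      linear_combination hlam - x ^ 2 * hab
    · simp only [Prod.snd_add, Prod.smul_snd, smul_eq_mul]
      linear_combination hmu - y ^ 2 * hab
  have hext := mem_extremePoints_hyperbola (by rw [← mul_pow]; positivity)
    (p := (whm t (x ^ 2 + x' ^ 2) - x ^ 2, whm t (y ^ 2 + y' ^ 2) - y ^ 2))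
    (by dsimp only; nlinarith) (by dsimp only; nlinarith)
    (whm_sub_sq_mul_whm_sub_sq ht0 ht1 hxy hprod)
  have := (mem_extremePoints_iff_left.1 hext).2 _ ⟨by simpa, by simpa, hF₃⟩
    _ ⟨by simpa, by simpa, hG₃⟩ hseg
  simpa using congrArg Prod.fst this

theorem OperatorMonotone.eqOn_whm_of_pos {t : ℝ} (ht0 : 0 < t) (ht1 : t ≤ 1) {F G : ℝ → ℝ}
    (hF : OperatorMonotone F) (hG : OperatorMonotone G) (hF0 : 0 ≤ F 0) (hG0 : 0 ≤ G 0)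
    (hF1 : F 1 = 1) (hG1 : G 1 = 1) {a b : ℝ} (ha : 0 < a) (hb : 0 < b) (hab : a + b = 1)
    (h : Set.EqOn (fun x => a * F x + b * G x) (whm t) (Set.Ici 0)) :
    Set.EqOn F (whm t) (Set.Ici 0) := by
  have hw0 : whm t 0 = 0 := by simp [whm_of_pos ht0]
  have h0 : a * F 0 + b * G 0 = 0 := (h (Set.mem_Ici.2 le_rfl)).trans hw0
  have hF0' : F 0 = 0 := by nlinarith [mul_nonneg ha.le hF0, mul_nonneg hb.le hG0]
  have hG0' : G 0 = 0 := by nlinarith [mul_nonneg ha.le hF0, mul_nonneg hb.le hG0]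
  intro z hz
  rcases (Set.mem_Ici.1 hz).eq_or_lt with rfl | hz
  · rw [hF0', hw0]
  obtain ⟨x, y, x', y', hxy, hprod, hne, rfl⟩ := exists_sq_add_sq_eq hz
  exact hF.eq_whm_sq_add_sq ht0 ht1 hG hF0' hG0' hF1 hG1 ha hb hab h hxy hprod hne

theorem OperatorMonotone.eqOn_whm {t : ℝ} (ht : t ∈ Set.Icc (0 : ℝ) 1) {F G : ℝ → ℝ}
    (hF : OperatorMonotone F) (hG : OperatorMonotone G) (hF0 : 0 ≤ F 0) (hG0 : 0 ≤ G 0)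
    (hF1 : F 1 = 1) (hG1 : G 1 = 1) {a b : ℝ} (ha : 0 < a) (hb : 0 < b) (hab : a + b = 1)
    (h : Set.EqOn (fun x => a * F x + b * G x) (whm t) (Set.Ici 0)) :
    Set.EqOn F (whm t) (Set.Ici 0) := by
  rcases ht.1.eq_or_lt with rfl | ht0
  · rw [funext whm_zero_left] at h ⊢
    exact eqOn_one_of_monotoneOn hF.monotoneOn hG.monotoneOn hF1 hG1 ha hb hab h
  · exact hF.eqOn_whm_of_pos ht0 ht.2 hG hF0 hG0 hF1 hG1 ha hb hab h

theorem ext_apply (f : Set.Ici (0 : ℝ) → ℝ) {x : ℝ} (hx : 0 ≤ x) : ext f x = f ⟨x, hx⟩ :=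
  dif_pos hx

theorem whm_mem_S {t : ℝ} (ht : t ∈ Set.Icc (0 : ℝ) 1) :
    (fun x : Set.Ici (0 : ℝ) => whm t x) ∈ S :=
  ⟨fun x => whm_nonneg ht x.2,
    (operatorMonotone_whm ht).congr fun _ hx => (ext_apply (fun x => whm t x) hx).symm,
    whm_one_right t⟩

theorem stmt12 (t : ℝ) (ht : t ∈ Set.Icc (0 : ℝ) 1) :
    (fun x : Set.Ici (0 : ℝ) => whm t (x : ℝ)) ∈ S.extremePoints ℝ := by
  refine mem_extremePoints_iff_left.2 ⟨whm_mem_S ht, ?_⟩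
  rintro f ⟨hf0, hf, hf1⟩ g ⟨hg0, hg, hg1⟩ ⟨a, b, ha, hb, hab, hfg⟩
  have hF := (OperatorMonotone.eqOn_whm ht hf hg ((ext_apply f le_rfl).trans_ge (hf0 _))
    ((ext_apply g le_rfl).trans_ge (hg0 _)) ((ext_apply f zero_le_one).trans hf1)
    ((ext_apply g zero_le_one).trans hg1) ha hb hab fun x hx => by
      simpa [ext_apply _ hx] using congrFun hfg ⟨x, hx⟩)
  funext x
  simpa [ext_apply _ x.2] using hF x.2
end

section
/- Let μ be a finite Borel measure on [0,1] and let f : [0,∞) → [0,∞) be defined by f(x) = ∫_{[0,1]} (1 !_t x) dμ(t). Let Θ : [0,1] → [0,1] be the map t ↦ 1-t. Then f is symmetric, i.e. f(x) = x·f(1/x) for all x ∈ (0,∞), if and only if μ is symmetric, i.e. the pushforward measure Θ_*μ equals μ. -/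
/-! Write `F_ν(x) = ∫ (1 !_t x) dν(t)`, so that `f = F_μ`. Since `x * (1 !_t x⁻¹) = 1 !_{1-t} x`,
we have `x f(1/x) = F_{Θ_*μ}(x)`, so `f` is symmetric iff `F_μ = F_{Θ_*μ}` on `(0,∞)`. For
`|y| < 1`, `F_ν((1 - y)⁻¹) = ∫ (1 - t y)⁻¹ dν(t) = ∑ₙ (∫ tⁿ dν) yⁿ`, so `F_ν` determines the
moments of `ν`, and by Weierstrass approximation a finite measure on `[0,1]` is determined by its
moments. -/

open MeasureTheory Real

/-- The map `Θ : [0,1] → [0,1]`, `t ↦ 1 - t`. -/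
noncomputable def theta (t : Set.Icc (0 : ℝ) 1) : Set.Icc (0 : ℝ) 1 :=
  ⟨1 - (t : ℝ), Set.mem_Icc.mpr
    ⟨by linarith [(Set.mem_Icc.mp t.2).2], by linarith [(Set.mem_Icc.mp t.2).1]⟩⟩

open Filter Topology Polynomial

theorem MeasureTheory.continuous_integral_continuousMap {X : Type*} [TopologicalSpace X]
    [CompactSpace X] [MeasurableSpace X] [BorelSpace X] (μ : Measure X) [IsFiniteMeasure μ] :
    Continuous fun g : C(X, ℝ) => ∫ x, g x ∂μ :=
  (continuous_integral.comp (ContinuousMap.toLp 1 μ ℝ (E := ℝ)).continuous).congr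
    fun g => integral_congr_ae (ContinuousMap.coeFn_toLp μ g)

section Moments

variable {s : Set ℝ} [CompactSpace s] {μ ν : Measure s} [IsFiniteMeasure μ] [IsFiniteMeasure ν]

theorem MeasureTheory.integral_eval_eq_of_forall_integral_pow_eq
    (h : ∀ n : ℕ, ∫ x, (x : ℝ) ^ n ∂μ = ∫ x, (x : ℝ) ^ n ∂ν) (p : ℝ[X]) :
    ∫ x, p.eval (x : ℝ) ∂μ = ∫ x, p.eval (x : ℝ) ∂ν := by
  have hint (κ : Measure s) [IsFiniteMeasure κ] (i : ℕ) :
      Integrable (fun x : s => p.coeff i * (x : ℝ) ^ i) κ :=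
    Continuous.integrable_of_hasCompactSupport (by fun_prop) (.of_compactSpace _)
  simp_rw [eval_eq_sum_range]
  rw [integral_finsetSum _ fun i _ => hint μ i, integral_finsetSum _ fun i _ => hint ν i]
  simp_rw [integral_const_mul, h]

theorem MeasureTheory.Measure.ext_of_forall_integral_pow_eq
    (h : ∀ n : ℕ, ∫ x, (x : ℝ) ^ n ∂μ = ∫ x, (x : ℝ) ^ n ∂ν) : μ = ν := by
  have hclosed : IsClosed {g : C(s, ℝ) | ∫ x, g x ∂μ = ∫ x, g x ∂ν} :=
    isClosed_eq (continuous_integral_continuousMap μ) (continuous_integral_continuousMap ν)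
  have hpoly : (polynomialFunctions s : Set C(s, ℝ)) ⊆ {g | ∫ x, g x ∂μ = ∫ x, g x ∂ν} := by
    rw [polynomialFunctions_coe]
    rintro _ ⟨p, rfl⟩
    exact integral_eval_eq_of_forall_integral_pow_eq h p
  refine ext_of_forall_integral_eq_of_IsFiniteMeasure fun g =>
    hclosed.closure_subset_iff.mpr hpoly ?_
  rw [← Subalgebra.topologicalClosure_coe, polynomialFunctions.topologicalClosure]
  trivial

end Moments

theorem hasFPowerSeriesAt_ofScalarsSum_of_abs_le {a : ℕ → ℝ} {M : ℝ} (ha : ∀ n, |a n| ≤ M) :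
    HasFPowerSeriesAt (FormalMultilinearSeries.ofScalarsSum a)
      (FormalMultilinearSeries.ofScalars ℝ a) 0 := by
  have hrad : (1 : ENNReal) ≤ (FormalMultilinearSeries.ofScalars ℝ a).radius :=
    FormalMultilinearSeries.le_radius_of_bound _ M fun n => by
      simpa [FormalMultilinearSeries.ofScalars_norm] using ha n
  exact ((FormalMultilinearSeries.ofScalars ℝ a).hasFPowerSeriesOnBall
    (zero_lt_one.trans_le hrad)).hasFPowerSeriesAt

theorem eq_of_eventually_tsum_mul_pow_eq {a b : ℕ → ℝ} {Ma Mb : ℝ} (ha : ∀ n, |a n| ≤ Ma)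
    (hb : ∀ n, |b n| ≤ Mb) (h : ∀ᶠ y in 𝓝 0, ∑' n, a n * y ^ n = ∑' n, b n * y ^ n) : a = b := by
  refine FormalMultilinearSeries.ofScalars_series_injective ℝ ℝ
    ((hasFPowerSeriesAt_ofScalarsSum_of_abs_le ha).eq_formalMultilinearSeries_of_eventually
      (hasFPowerSeriesAt_ofScalarsSum_of_abs_le hb) ?_)
  simpa only [FormalMultilinearSeries.ofScalars_sum_eq, smul_eq_mul] using h

theorem MeasureTheory.hasSum_integral_pow_mul_pow {X : Type*} [MeasurableSpace X] (μ : Measure X)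
    [IsFiniteMeasure μ] {g : X → ℝ} (hg : Measurable g) (hg1 : ∀ x, |g x| ≤ 1) {y : ℝ}
    (hy : |y| < 1) :
    HasSum (fun n => (∫ x, g x ^ n ∂μ) * y ^ n) (∫ x, (1 - g x * y)⁻¹ ∂μ) := by
  simp_rw [← integral_mul_const, ← mul_pow]
  refine hasSum_integral_of_dominated_convergence (fun n _ => |y| ^ n) (fun n => by fun_prop)
    (fun n => ae_of_all _ fun x => ?_) (ae_of_all _ fun _ => summable_geometric_of_lt_one
      (abs_nonneg y) hy) (integrable_const _) (ae_of_all _ fun x => ?_)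
  · rw [norm_pow, norm_mul, Real.norm_eq_abs, Real.norm_eq_abs]
    exact pow_le_pow_left₀ (by positivity) (mul_le_of_le_one_left (abs_nonneg y) (hg1 x)) n
  · refine hasSum_geometric_of_abs_lt_one ?_
    rw [abs_mul]
    exact (mul_le_of_le_one_left (abs_nonneg y) (hg1 x)).trans_lt hy

theorem MeasureTheory.abs_integral_pow_le {X : Type*} [MeasurableSpace X] (μ : Measure X)
    [IsFiniteMeasure μ] {g : X → ℝ} (hg1 : ∀ x, |g x| ≤ 1) (n : ℕ) :
    |∫ x, g x ^ n ∂μ| ≤ μ.real Set.univ := by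
  simpa using norm_integral_le_of_norm_le_const (μ := μ) (C := 1) (f := fun x => g x ^ n)
    (ae_of_all _ fun x => by simpa [abs_pow] using pow_le_one₀ (abs_nonneg _) (hg1 x))

theorem measurable_whm (x : ℝ) : Measurable fun t : ℝ => whm t x :=
  Measurable.ite (by measurability) measurable_const (by fun_prop)

theorem whm_of_ne_zero (t : ℝ) {x : ℝ} (hx : x ≠ 0) : whm t x = x / ((1 - t) * x + t) :=
  if_neg fun h => hx h.2

theorem mul_whm_inv (t : ℝ) {x : ℝ} (hx : x ≠ 0) : x * whm t x⁻¹ = whm (1 - t) x := by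
  rw [whm_of_ne_zero t (inv_ne_zero hx), whm_of_ne_zero (1 - t) hx]
  field_simp
  ring

theorem whm_inv_one_sub (t : ℝ) {y : ℝ} (hy : y ≠ 1) : whm t (1 - y)⁻¹ = (1 - t * y)⁻¹ := by
  have hy' : 1 - y ≠ 0 := sub_ne_zero.mpr hy.symm
  rw [whm_of_ne_zero t (inv_ne_zero hy')]
  field_simp
  ring

theorem measurable_theta : Measurable theta :=
  (Continuous.subtype_mk (continuous_const.sub continuous_subtype_val) _).measurable

theorem mul_integral_whm_inv (μ : Measure (Set.Icc (0 : ℝ) 1)) {x : ℝ} (hx : x ≠ 0) :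
    x * ∫ t, whm t x⁻¹ ∂μ = ∫ t, whm t x ∂μ.map theta := by
  rw [integral_map measurable_theta.aemeasurable
    ((measurable_whm x).comp measurable_subtype_coe).aestronglyMeasurable (f := fun t => whm t x),
    ← integral_const_mul]
  exact integral_congr_ae (ae_of_all _ fun t => mul_whm_inv t hx)

theorem MeasureTheory.Measure.ext_of_forall_integral_whm_eq {μ ν : Measure (Set.Icc (0 : ℝ) 1)}
    [IsFiniteMeasure μ] [IsFiniteMeasure ν]
    (h : ∀ x, 0 < x → ∫ t, whm t x ∂μ = ∫ t, whm t x ∂ν) : μ = ν := by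
  have hval : ∀ t : Set.Icc (0 : ℝ) 1, |(t : ℝ)| ≤ 1 := fun t => abs_le.mpr
    ⟨by linarith [t.2.1], t.2.2⟩
  refine ext_of_forall_integral_pow_eq (congrFun (eq_of_eventually_tsum_mul_pow_eq
    (abs_integral_pow_le μ hval) (abs_integral_pow_le ν hval) ?_))
  filter_upwards [Metric.ball_mem_nhds (0 : ℝ) one_pos] with y hy
  rw [Metric.mem_ball, dist_zero_right, Real.norm_eq_abs] at hy
  have hy1 : y < 1 := (le_abs_self y).trans_lt hy
  rw [(hasSum_integral_pow_mul_pow μ measurable_subtype_coe hval hy).tsum_eq,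
    (hasSum_integral_pow_mul_pow ν measurable_subtype_coe hval hy).tsum_eq]
  simpa only [whm_inv_one_sub _ hy1.ne] using h (1 - y)⁻¹ (inv_pos.mpr (sub_pos.mpr hy1))

theorem stmt16 (μ : Measure (Set.Icc (0 : ℝ) 1)) [IsFiniteMeasure μ] (f : ℝ → ℝ)
    (hf : ∀ x : ℝ, 0 ≤ x → f x = ∫ t : Set.Icc (0 : ℝ) 1, whm (t : ℝ) x ∂μ) :
    (∀ x : ℝ, 0 < x → f x = x * f (1 / x)) ↔ Measure.map theta μ = μ := by
  have hflip : ∀ x, 0 < x → x * f (1 / x) = ∫ t, whm t x ∂μ.map theta := fun x hx => by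
    rw [hf _ (one_div_nonneg.mpr hx.le), one_div, mul_integral_whm_inv μ hx.ne']
  constructor
  · intro hsym
    refine Measure.ext_of_forall_integral_whm_eq fun x hx => ?_
    rw [← hflip x hx, ← hsym x hx, hf x hx.le]
  · intro hθ x hx
    rw [hflip x hx, hθ, hf x hx.le]
end
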